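/- arXiv:1910.08311 — 2 statements merged into one kernel-verified Lean document; each statement's English description precedes it below -/
import Mathlib

section
/- For every real number α with 1 < α ≤ 2, the family (c^α_s)_{s∈ℤ} is absolutely summable, ∑_{s∈ℤ} c^α_s = 0, and ∑_{s∈ℤ} |c^α_s| = 2 c^α_0. -/
/-!
From `Γ(z + 1) = z Γ(z)` the coefficients satisfy the hypergeometric recurrence
`(α/2 + n + 1) c_{n+1} = (n - α/2) c_n`, so for `0 < α ≤ 2` they are nonpositive for `n ≥ 1`,
and the weighted terms `B_n = (n + 1 + α/2) |c_{n+1}|` decrease by exactly `α |c_{n+1}|` at each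
step. Hence `α ∑_{n<N} |c_{n+1}| = α c_0 / 2 - B_N`; the partial sums are bounded, and the limit of
`B_N ≈ N |c_{N+1}|` must vanish because the series converges and `∑ 1/N` does not. So the tail
sums to `-c_0/2`, and the symmetry `c_{-s} = c_s` gives both identities.
-/

/-- Fractional centered-difference coefficients
`c^α_s = (-1)^s Γ(α+1) / (Γ(α/2 − s + 1) · Γ(α/2 + s + 1))`.
(In Lean, division by zero is zero, matching the stated convention.) -/
noncomputable def cCoef (α : ℝ) (s : ℤ) : ℝ :=
  ((-1 : ℝ) ^ s) * Real.Gamma (α + 1) /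
    (Real.Gamma (α / 2 - s + 1) * Real.Gamma (α / 2 + s + 1))

open Filter Topology Asymptotics

theorem eq_zero_of_summable_of_tendsto_natCast_mul {d : ℕ → ℝ} {L : ℝ} (hd : Summable d)
    (h : Tendsto (fun n : ℕ => (n : ℝ) * d n) atTop (𝓝 L)) : L = 0 := by
  by_contra hL
  have hequiv : d ~[atTop] fun n => L * (n : ℝ)⁻¹ := by
    refine (((isEquivalent_const_iff_tendsto hL).mpr h).mul IsEquivalent.refl).congr_left ?_
    filter_upwards [eventually_ne_atTop 0] with n hn
    simp [field]
  exact Real.not_summable_natCast_inv <|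
    (summable_mul_left_iff hL).mp (hequiv.summable_iff_nat.mp hd)

theorem hasSum_of_add_mul_succ_eq {d : ℕ → ℝ} {a κ : ℝ} (hκ : 0 < κ) (ha : 0 ≤ a)
    (hd : ∀ n, 0 ≤ d n) (hstep : ∀ n : ℕ, (n + 1 + a) * d (n + 1) = (n + a - κ) * d n) :
    HasSum d (a * d 0 / κ) := by
  set B : ℕ → ℝ := fun n => (n + a) * d n with hB
  have hB_nonneg (n : ℕ) : 0 ≤ B n := mul_nonneg (by positivity) (hd n)
  have hpartial (N : ℕ) : κ * ∑ i ∈ Finset.range N, d i = B 0 - B N := by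
    induction N with
    | zero => simp
    | succ N ih =>
      rw [Finset.sum_range_succ, mul_add, ih]
      simp only [hB, Nat.cast_add, Nat.cast_one, Nat.cast_zero]
      linear_combination hstep N
  have hsum : Summable d := by
    refine summable_of_sum_range_le hd (c := B 0 / κ) fun N => ?_
    rw [le_div_iff₀' hκ, hpartial]
    linarith [hB_nonneg N]
  have hlim : Tendsto (fun n : ℕ => (n : ℝ) * d n) atTop (𝓝 (B 0 - κ * ∑' n, d n)) := by
    have hB_lim : Tendsto B atTop (𝓝 (B 0 - κ * ∑' n, d n)) := by
      simpa only [hpartial, sub_sub_cancel] using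
        (hsum.hasSum.tendsto_sum_nat.const_mul κ).const_sub (B 0)
    simpa [hB, add_mul] using hB_lim.sub (hsum.tendsto_atTop_zero.const_mul a)
  have hzero := eq_zero_of_summable_of_tendsto_natCast_mul hsum hlim
  simp only [hB, Nat.cast_zero, zero_add] at hzero
  convert hsum.hasSum using 1
  field_simp
  linarith

theorem HasSum.of_add_one_of_even {M : Type*} [AddCommMonoid M] [TopologicalSpace M]
    [ContinuousAdd M] {f : ℤ → M} {m : M} (hf : Function.Even f)
    (h : HasSum (fun n : ℕ => f (n + 1)) m) : HasSum f (m + f 0 + m) :=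
  h.of_add_one_of_neg_add_one (by simpa only [hf.eq] using h)

theorem cCoef_even (α : ℝ) : Function.Even (cCoef α) := by
  intro s
  simp only [cCoef, Int.cast_neg, sub_neg_eq_add, ← sub_eq_add_neg, zpow_neg, ← inv_zpow,
    inv_neg, inv_one, mul_comm (Real.Gamma (α / 2 + s + 1))]

theorem cCoef_zero_pos {α : ℝ} (hα : -1 < α) : 0 < cCoef α 0 := by
  have h₁ : 0 < Real.Gamma (α + 1) := Real.Gamma_pos_of_pos (by linarith)
  have h₂ : 0 < Real.Gamma (α / 2 + 1) := Real.Gamma_pos_of_pos (by linarith)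
  simp only [cCoef, zpow_zero, Int.cast_zero, sub_zero, add_zero, one_mul]
  positivity

theorem cCoef_succ {α : ℝ} (hα : -2 < α) (n : ℕ) :
    (α / 2 + n + 1) * cCoef α (n + 1) = (n - α / 2) * cCoef α n := by
  have hp : 0 < α / 2 + n + 1 := by linarith [n.cast_nonneg (α := ℝ)]
  set x := α / 2 - n
  have e₁ : α / 2 - ((n + 1 : ℤ) : ℝ) + 1 = x := by push_cast; ring
  have e₂ : α / 2 - ((n : ℤ) : ℝ) + 1 = x + 1 := by push_cast; ring
  have e₃ : α / 2 + ((n + 1 : ℤ) : ℝ) + 1 = (α / 2 + n + 1) + 1 := by push_cast; ring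
  have e₄ : α / 2 + ((n : ℤ) : ℝ) + 1 = α / 2 + n + 1 := by push_cast; ring
  have e₅ : (n : ℝ) - α / 2 = -x := by ring
  simp only [cCoef, e₁, e₂, e₃, e₄, e₅, zpow_add_one₀ (by norm_num : (-1 : ℝ) ≠ 0),
    Real.Gamma_add_one hp.ne']
  -- `Γ(x + 1) = x Γ(x)` fails only at `x = 0`, where both sides vanish because `Γ 0 = 0` in Mathlib
  rcases eq_or_ne x 0 with hx | hx
  · simp [hx]
  rw [Real.Gamma_add_one hx]
  rcases eq_or_ne (Real.Gamma x) 0 with hG | hG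
  · simp [hG]
  have hH := (Real.Gamma_pos_of_pos hp).ne'
  have hp' := hp.ne'
  generalize Real.Gamma (α / 2 + n + 1) = H at hH ⊢
  generalize α / 2 + n + 1 = p at hp' ⊢
  field_simp

theorem cCoef_natCast_add_one_nonpos {α : ℝ} (hα₀ : 0 ≤ α) (hα₂ : α ≤ 2) (n : ℕ) :
    cCoef α (n + 1) ≤ 0 := by
  induction n with
  | zero =>
    have h := cCoef_succ (by linarith) 0
    have hc₀ := cCoef_zero_pos (α := α) (by linarith)
    push_cast at h ⊢
    nlinarith
  | succ n ih =>
    have h := cCoef_succ (α := α) (by linarith) (n + 1)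
    push_cast at h ih ⊢
    nlinarith [n.cast_nonneg (α := ℝ)]

theorem hasSum_cCoef_natCast_add_one {α : ℝ} (hα₀ : 0 < α) (hα₂ : α ≤ 2) :
    HasSum (fun n : ℕ => cCoef α (n + 1)) (-(cCoef α 0 / 2)) := by
  have hstep (n : ℕ) : (n + 1 + (1 + α / 2)) * -cCoef α ((n + 1 : ℕ) + 1) =
      (n + (1 + α / 2) - α) * -cCoef α (n + 1) := by
    have h := cCoef_succ (by linarith) (n + 1)
    push_cast at h ⊢
    linear_combination -h
  have h := hasSum_of_add_mul_succ_eq hα₀ (by positivity)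
    (fun n => neg_nonneg.mpr (cCoef_natCast_add_one_nonpos hα₀.le hα₂ n)) hstep
  have hd₀ : (1 + α / 2) * -cCoef α ((0 : ℕ) + 1) / α = cCoef α 0 / 2 := by
    have h₀ := cCoef_succ (α := α) (by linarith) 0
    push_cast at h₀ ⊢
    field_simp
    linear_combination (-2) * h₀
  simpa only [hd₀, neg_neg] using h.neg

/-- For `1 < α ≤ 2`, the family `(c^α_s)_{s∈ℤ}` is absolutely summable,
`∑_{s∈ℤ} c^α_s = 0`, and `∑_{s∈ℤ} |c^α_s| = 2 c^α_0`. -/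
theorem cCoef_summable_sum_zero (α : ℝ) (hα₁ : 1 < α) (hα₂ : α ≤ 2) :
    Summable (fun s : ℤ => |cCoef α s|) ∧
    (∑' s : ℤ, cCoef α s) = 0 ∧
    (∑' s : ℤ, |cCoef α s|) = 2 * cCoef α 0 := by
  have htail := hasSum_cCoef_natCast_add_one (by linarith) hα₂
  have htail_abs : HasSum (fun n : ℕ => |cCoef α (n + 1)|) (cCoef α 0 / 2) := by
    simpa only [abs_of_nonpos (cCoef_natCast_add_one_nonpos (by linarith) hα₂ _), neg_neg]
      using htail.neg
  have hsum := htail.of_add_one_of_even (cCoef_even α)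
  have hsum_abs := htail_abs.of_add_one_of_even (f := fun s => |cCoef α s|)
    ((cCoef_even α).left_comp abs)
  have hc₀ := cCoef_zero_pos (α := α) (by linarith)
  refine ⟨hsum_abs.summable, ?_, ?_⟩
  · rw [hsum.tsum_eq]
    ring
  · rw [hsum_abs.tsum_eq, abs_of_pos hc₀]
    ring
end

section
/- Let 1 < α ≤ 2, h > 0, and let M ≥ 2 be an integer. Then the real (M−1)×(M−1) Toeplitz matrix C with entries C_{j,k} = h^{−α} c^α_{j−k} (for 1 ≤ j, k ≤ M−1) is symmetric and positive definite. -/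
open Finset

namespace Real

theorem inv_Gamma_eq_self_mul_inv_Gamma_add_one (x : ℝ) :
    (Gamma x)⁻¹ = x * (Gamma (x + 1))⁻¹ := by
  rcases ne_or_eq x 0 with hx | rfl
  · rw [Gamma_add_one hx, mul_inv, mul_inv_cancel_left₀ hx]
  · rw [zero_add, Gamma_zero, inv_zero, zero_mul]

theorem neg_one_pow_mul_inv_Gamma_nonneg (k : ℕ) {x : ℝ} (hlo : -k < x) (hhi : x ≤ 1 - k) :
    0 ≤ (-1) ^ k * (Gamma x)⁻¹ := by
  induction k generalizing x with
  | zero => simpa using (Gamma_pos_of_pos (by simpa using hlo)).le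
  | succ k ih =>
    push_cast at hlo hhi
    have hx : -x ≥ 0 := by linarith [k.cast_nonneg (α := ℝ)]
    have := ih (x := x + 1) (by linarith) (by linarith)
    rw [inv_Gamma_eq_self_mul_inv_Gamma_add_one, pow_succ]
    calc (0 : ℝ) ≤ -x * ((-1) ^ k * (Gamma (x + 1))⁻¹) := mul_nonneg hx this
      _ = _ := by ring

end Real

section cCoef

variable {α : ℝ}

theorem cCoef_neg (α : ℝ) (s : ℤ) : cCoef α (-s) = cCoef α s := by
  unfold cCoef
  rw [zpow_neg, ← inv_zpow, inv_neg, inv_one]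
  push_cast
  ring_nf

/-- The `v_s` with `c^α_s = v_s - v_{s+1}`; formally the tail sum `∑_{t ≥ s} c^α_t`. -/
noncomputable def cCoefTail (α : ℝ) (s : ℤ) : ℝ :=
  (-1 : ℝ) ^ s * Real.Gamma α / (Real.Gamma (α / 2 - s + 1) * Real.Gamma (α / 2 + s))

theorem cCoef_eq_cCoefTail_sub (hα : α ≠ 0) (s : ℤ) :
    cCoef α s = cCoefTail α s - cCoefTail α (s + 1) := by
  unfold cCoef cCoefTail
  set a := α / 2
  push_cast
  rw [show a - (s + 1) + 1 = a - s by ring, show a + (s + 1) = a + s + 1 by ring,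
    zpow_add_one₀ (by norm_num), Real.Gamma_add_one hα]
  simp only [div_eq_mul_inv, mul_inv]
  rw [Real.inv_Gamma_eq_self_mul_inv_Gamma_add_one (a - s),
    Real.inv_Gamma_eq_self_mul_inv_Gamma_add_one (a + s)]
  ring

theorem cCoefTail_nonneg (hα₀ : 0 < α) (hα₂ : α ≤ 2) {s : ℤ} (hs : s ≤ 0) :
    0 ≤ cCoefTail α s := by
  obtain ⟨m, rfl⟩ : ∃ m : ℕ, s = -m := ⟨(-s).toNat, by omega⟩
  have hsign := Real.neg_one_pow_mul_inv_Gamma_nonneg m (x := α / 2 - m) (by linarith)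
    (by linarith)
  unfold cCoefTail
  rw [zpow_neg, zpow_natCast, ← inv_pow, inv_neg, inv_one, div_eq_mul_inv, mul_inv]
  push_cast
  rw [show α / 2 - -(m : ℝ) + 1 = α / 2 + m + 1 by ring, ← sub_eq_add_neg]
  calc (0 : ℝ) ≤ Real.Gamma α * (Real.Gamma (α / 2 + m + 1))⁻¹ *
        ((-1) ^ m * (Real.Gamma (α / 2 - m))⁻¹) := by positivity
    _ = _ := by ring

theorem cCoefTail_nonpos (hα₀ : 0 < α) (hα₂ : α ≤ 2) {s : ℤ} (hs : 0 < s) :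
    cCoefTail α s ≤ 0 := by
  obtain ⟨k, rfl⟩ : ∃ k : ℕ, s = k + 1 := ⟨(s - 1).toNat, by omega⟩
  have hsign := Real.neg_one_pow_mul_inv_Gamma_nonneg k (x := α / 2 - k) (by linarith)
    (by linarith)
  unfold cCoefTail
  rw [zpow_add_one₀ (by norm_num), zpow_natCast, div_eq_mul_inv, mul_inv]
  push_cast
  rw [show α / 2 - (k + 1) + 1 = α / 2 - k by ring]
  calc _ = -(Real.Gamma α * (Real.Gamma (α / 2 + (k + 1)))⁻¹ *
        ((-1) ^ k * (Real.Gamma (α / 2 - k))⁻¹)) := by ring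
    _ ≤ 0 := neg_nonpos.mpr (by positivity)

theorem cCoefTail_one_neg (hα₀ : 0 < α) : cCoefTail α 1 < 0 := by
  unfold cCoefTail
  rw [Int.cast_one, zpow_one, sub_add_cancel, neg_one_mul, neg_div, neg_neg_iff_pos]
  positivity

theorem cCoef_eq_mul_cCoefTail (hα : α ≠ 0) {s : ℤ} (hs : α / 2 + s ≠ 0) :
    cCoef α s = α / (α / 2 + s) * cCoefTail α s := by
  unfold cCoef cCoefTail
  rw [Real.Gamma_add_one hα, Real.Gamma_add_one hs]
  simp only [div_eq_mul_inv, mul_inv]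
  ring

theorem cCoef_nonpos (hα₀ : 0 < α) (hα₂ : α ≤ 2) {s : ℤ} (hs : s ≠ 0) :
    cCoef α s ≤ 0 := by
  wlog hs' : 0 < s generalizing s
  · rw [← cCoef_neg]
    exact this (neg_ne_zero.mpr hs) (by omega)
  have hden : 0 < α / 2 + s := by positivity
  rw [cCoef_eq_mul_cCoefTail hα₀.ne' hden.ne']
  exact mul_nonpos_of_nonneg_of_nonpos (by positivity) (cCoefTail_nonpos hα₀ hα₂ hs')

theorem cCoef_one_neg (hα₀ : 0 < α) : cCoef α 1 < 0 := by
  have hden : 0 < α / 2 + (1 : ℤ) := by positivity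
  rw [cCoef_eq_mul_cCoefTail hα₀.ne' hden.ne']
  exact mul_neg_of_pos_of_neg (by positivity) (cCoefTail_one_neg hα₀)

theorem sum_range_cCoef_sub (hα : α ≠ 0) (j : ℤ) (n : ℕ) :
    ∑ i ∈ range n, cCoef α (j - i) = cCoefTail α (j - n + 1) - cCoefTail α (j + 1) := by
  have hstep : ∀ i : ℕ, cCoef α (j - i) =
      cCoefTail α (j - (i + 1 : ℕ) + 1) - cCoefTail α (j - i + 1) := fun i => by
    rw [cCoef_eq_cCoefTail_sub hα]
    push_cast
    ring_nf
  simp only [hstep, sum_range_sub (fun i => cCoefTail α (j - i + 1)), Nat.cast_zero, sub_zero]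

end cCoef

theorem Fin.apply_eq_apply_of_apply_succ_eq {n : ℕ} {β : Type*} {f : Fin n → β}
    (h : ∀ j k : Fin n, (j : ℕ) = k + 1 → f j = f k) (j k : Fin n) : f j = f k := by
  suffices H : ∀ (m : ℕ) (hm : m < n), f ⟨m, hm⟩ = f ⟨0, by omega⟩ from
    (H j j.isLt).trans (H k k.isLt).symm
  intro m hm
  induction m with
  | zero => rfl
  | succ m ih => rw [h ⟨m + 1, hm⟩ ⟨m, by omega⟩ rfl, ih]

namespace Matrix

theorem IsSymm.two_mul_dotProduct_mulVec_self {ι : Type*} [Fintype ι] {A : Matrix ι ι ℝ}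
    (hA : A.IsSymm) (x : ι → ℝ) :
    2 * (x ⬝ᵥ A *ᵥ x) =
      ∑ j, ∑ k, -A j k * (x j - x k) ^ 2 + 2 * ∑ j, (∑ k, A j k) * x j ^ 2 := by
  have hswap : ∑ j, ∑ k, A j k * x k ^ 2 = ∑ j, ∑ k, A j k * x j ^ 2 := by
    rw [Finset.sum_comm]
    simp only [hA.apply]
  have hexpand : ∀ j k, -A j k * (x j - x k) ^ 2 =
      2 * (x j * (A j k * x k)) - A j k * x j ^ 2 - A j k * x k ^ 2 := fun j k => by ring
  simp only [hexpand, Finset.sum_sub_distrib, Finset.sum_mul, hswap, dotProduct, mulVec,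
    ← Finset.mul_sum]
  ring

theorem IsSymm.posDef_of_sum_row_nonneg {n : ℕ} {A : Matrix (Fin n) (Fin n) ℝ} (hA : A.IsSymm)
    (hoff : ∀ j k, j ≠ k → A j k ≤ 0) (hrow : ∀ j, 0 ≤ ∑ k, A j k)
    (hpos : ∃ j, 0 < ∑ k, A j k) (hchain : ∀ j k : Fin n, (j : ℕ) = k + 1 → A j k < 0) :
    A.PosDef := by
  refine posDef_iff_dotProduct_mulVec.mpr ⟨isHermitian_iff_isSymm.mpr hA, fun x hx => ?_⟩
  rw [star_trivial]
  by_contra! hle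
  have hoffTerm : ∀ j k, 0 ≤ -A j k * (x j - x k) ^ 2 := fun j k => by
    rcases eq_or_ne j k with rfl | hjk
    · simp
    · exact mul_nonneg (neg_nonneg.mpr (hoff j k hjk)) (sq_nonneg _)
  have hdiagTerm : ∀ j, 0 ≤ (∑ k, A j k) * x j ^ 2 :=
    fun j => mul_nonneg (hrow j) (sq_nonneg _)
  have hoffSum := Finset.sum_nonneg fun j (_ : j ∈ Finset.univ) =>
    Finset.sum_nonneg fun k (_ : k ∈ Finset.univ) => hoffTerm j k
  have hdiagSum := Finset.sum_nonneg fun j (_ : j ∈ Finset.univ) => hdiagTerm j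
  have hform := hA.two_mul_dotProduct_mulVec_self x
  have hoffZero : ∀ j k, -A j k * (x j - x k) ^ 2 = 0 := fun j => by
    have hrows := (Fintype.sum_eq_zero_iff_of_nonneg fun j =>
      Finset.sum_nonneg fun k (_ : k ∈ Finset.univ) => hoffTerm j k).mp (by linarith)
    exact congrFun ((Fintype.sum_eq_zero_iff_of_nonneg (hoffTerm j)).mp (congrFun hrows j))
  have hdiagZero : ∀ j, (∑ k, A j k) * x j ^ 2 = 0 :=
    congrFun ((Fintype.sum_eq_zero_iff_of_nonneg hdiagTerm).mp (by linarith))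
  have hconst : ∀ j k, x j = x k := Fin.apply_eq_apply_of_apply_succ_eq fun j k hjk => by
    have := hoffZero j k
    rwa [mul_eq_zero, neg_eq_zero, or_iff_right (hchain j k hjk).ne, sq_eq_zero_iff,
      sub_eq_zero] at this
  obtain ⟨j₀, hj₀⟩ := hpos
  have hx₀ : x j₀ = 0 := by simpa [hj₀.ne'] using hdiagZero j₀
  exact hx (funext fun j => (hconst j j₀).trans hx₀)

end Matrix

section Toeplitz

variable {α : ℝ}

noncomputable def cCoefToeplitz (α : ℝ) (n : ℕ) : Matrix (Fin n) (Fin n) ℝ :=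
  Matrix.of fun j k => cCoef α ((j : ℤ) - (k : ℤ))

theorem cCoefToeplitz_isSymm (α : ℝ) (n : ℕ) : (cCoefToeplitz α n).IsSymm :=
  Matrix.IsSymm.ext fun j k => by
    simp only [cCoefToeplitz, Matrix.of_apply]
    rw [← neg_sub, cCoef_neg]

theorem sum_cCoefToeplitz_row (hα : α ≠ 0) {n : ℕ} (j : Fin n) :
    ∑ k, cCoefToeplitz α n j k = cCoefTail α (j - n + 1) - cCoefTail α (j + 1) := by
  simp only [cCoefToeplitz, Matrix.of_apply]
  rw [Fin.sum_univ_eq_sum_range (fun i => cCoef α (j - i)) n, sum_range_cCoef_sub hα]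

theorem cCoefToeplitz_posDef (hα₀ : 0 < α) (hα₂ : α ≤ 2) (n : ℕ) :
    (cCoefToeplitz α n).PosDef := by
  rcases n with _ | n
  · exact Matrix.posDef_iff_dotProduct_mulVec.mpr
      ⟨Matrix.isHermitian_iff_isSymm.mpr (cCoefToeplitz_isSymm α 0),
        fun x hx => (hx (Subsingleton.elim _ _)).elim⟩
  have hrow (j : Fin (n + 1)) : 0 ≤ cCoefTail α (j - (n + 1 : ℕ) + 1) :=
    cCoefTail_nonneg hα₀ hα₂ (by omega)
  refine (cCoefToeplitz_isSymm α _).posDef_of_sum_row_nonneg (fun j k hjk => ?_) (fun j => ?_)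
    ⟨0, ?_⟩ (fun j k hjk => ?_)
  · exact cCoef_nonpos hα₀ hα₂ (sub_ne_zero.mpr (by exact_mod_cast Fin.val_ne_of_ne hjk))
  · rw [sum_cCoefToeplitz_row hα₀.ne']
    linarith [hrow j, cCoefTail_nonpos hα₀ hα₂ (s := j + 1) (by omega)]
  · rw [sum_cCoefToeplitz_row hα₀.ne']
    simpa using sub_pos_of_lt ((cCoefTail_one_neg hα₀).trans_le (hrow 0))
  · simpa [cCoefToeplitz, hjk] using cCoef_one_neg hα₀

end Toeplitz

theorem toeplitz_cCoef_posdef_general (α h : ℝ) (hα₁ : 1 < α) (hα₂ : α ≤ 2) (hh : 0 < h)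
    (M : ℕ)
    (C : Matrix (Fin (M - 1)) (Fin (M - 1)) ℝ)
    (hC : ∀ j k : Fin (M - 1), C j k = h ^ (-α) * cCoef α ((j : ℤ) - (k : ℤ))) :
    C.IsSymm ∧ C.PosDef := by
  have hC' : C = h ^ (-α) • cCoefToeplitz α (M - 1) := by
    ext j k
    simp [hC, cCoefToeplitz]
  rw [hC']
  exact ⟨(cCoefToeplitz_isSymm α _).smul _,
    (cCoefToeplitz_posDef (by linarith) hα₂ _).smul (Real.rpow_pos_of_pos hh _)⟩

/-- For `1 < α ≤ 2`, `h > 0` and `M ≥ 2`, the `(M−1)×(M−1)` Toeplitz matrix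
`C_{j,k} = h^{−α} c^α_{j−k}` is symmetric and positive definite. -/
theorem toeplitz_cCoef_posdef (α h : ℝ) (hα₁ : 1 < α) (hα₂ : α ≤ 2) (hh : 0 < h)
    (M : ℕ) (hM : 2 ≤ M)
    (C : Matrix (Fin (M - 1)) (Fin (M - 1)) ℝ)
    (hC : ∀ j k : Fin (M - 1), C j k = h ^ (-α) * cCoef α ((j : ℤ) - (k : ℤ))) :
    C.IsSymm ∧ C.PosDef :=
  toeplitz_cCoef_posdef_general α h hα₁ hα₂ hh M C hC
end
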